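/- For all u, v, w ∈ W, the following are equivalent: (i) for every q ∈ W with q ≤ w, one has q⁻¹ v ≤ u; (ii) w⁻¹ * v ≤ u. -/

import Mathlib

open scoped Classical

/-- Data of a root system with a fixed choice of simple roots: an ambient
`ℚ`-vector space `V`, a set of roots `Φ` with a distinguished subset `pos` of
positive roots, a coroot functional `coroot β = ⟨·, β^∨⟩` for each root, and
simple roots `α 1, …, α r`. -/
structure RootData where
  r : ℕ
  V : Type
  [grp : AddCommGroup V]
  [mod : Module ℚ V]
  Φ : Set V
  pos : Set V
  coroot : V → Module.Dual ℚ V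
  α : Fin r → V

attribute [instance] RootData.grp RootData.mod

namespace RootData

variable (R : RootData)

/-- The group of linear automorphisms of `V`, in which the Weyl group lives. -/
abbrev Aut : Type := R.V ≃ₗ[ℚ] R.V

/-- The linear map `v ↦ v - ⟨v, β^∨⟩ β`. -/
noncomputable def reflMap (β : R.V) : R.V →ₗ[ℚ] R.V :=
  LinearMap.id - (R.coroot β).smulRight β

/-- The reflection `s_β` associated to a root `β`, as a linear automorphism. -/
noncomputable def s (β : R.V) : R.Aut :=
  if h : (R.reflMap β).comp (R.reflMap β) = LinearMap.id then
    LinearEquiv.ofLinear (R.reflMap β) (R.reflMap β) h h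
  else LinearEquiv.refl ℚ R.V

/-- The simple reflections `s_i := s_{α_i}`. -/
noncomputable def S (i : Fin R.r) : R.Aut := R.s (R.α i)

/-- The Weyl group `W`, generated by the simple reflections. -/
noncomputable def weylGroup : Subgroup R.Aut := Subgroup.closure (Set.range R.S)

/-- The product `s_{i_1} ⋯ s_{i_k}` of a word in the simple reflections. -/
noncomputable def wordProd (l : List (Fin R.r)) : R.Aut := (l.map R.S).prod

/-- The length function on `W`: least length of a word in the simple
reflections expressing the given element. -/
noncomputable def len (w : R.Aut) : ℕ :=
  sInf {n | ∃ l : List (Fin R.r), l.length = n ∧ R.wordProd l = w}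

/-- A word is reduced if its length equals the length of its product. -/
def Reduced (l : List (Fin R.r)) : Prop := R.len (R.wordProd l) = l.length

/-- The Bruhat order on `W`: `u ≤ w` iff some reduced word for `w` has a
subword whose product is `u`. -/
def BruhatLE (u w : R.Aut) : Prop :=
  ∃ l : List (Fin R.r), R.Reduced l ∧ R.wordProd l = w ∧
    ∃ l' : List (Fin R.r), l'.Sublist l ∧ R.wordProd l' = u

/-- Strict Bruhat order. -/
def BruhatLT (u w : R.Aut) : Prop := R.BruhatLE u w ∧ u ≠ w

/-- One step of the Demazure product: `s_i * w := max {w, s_i w}`. -/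
noncomputable def dmulStep (i : Fin R.r) (x : R.Aut) : R.Aut :=
  if R.len x < R.len (R.S i * x) then R.S i * x else x

/-- Demazure product of a word in the simple reflections against `w`:
`s_{i_1} * (s_{i_2} * (⋯ * (s_{i_k} * w)))`. -/
noncomputable def dmulList (l : List (Fin R.r)) (w : R.Aut) : R.Aut :=
  l.foldr R.dmulStep w

/-- The Demazure product `v * w` on the Weyl group, computed by choosing a
reduced word for `v` (it is independent of this choice). -/
noncomputable def dmul (v w : R.Aut) : R.Aut :=
  if h : ∃ l : List (Fin R.r), R.Reduced l ∧ R.wordProd l = v then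
    R.dmulList h.choose w
  else v * w

/-- The parabolic subgroup `W_{P_i}` generated by the simple reflections
`s_j`, `j ≠ i`. -/
noncomputable def WPar (i : Fin R.r) : Subgroup R.Aut :=
  Subgroup.closure (R.S '' {j | j ≠ i})

/-- `W^{P_i}`: the set of minimal-length representatives of cosets of
`W/W_{P_i}`. -/
def minReps (i : Fin R.r) : Set R.Aut :=
  {v | v ∈ R.weylGroup ∧ ∀ p ∈ R.WPar i, R.len v ≤ R.len (v * p)}

/-- `u` is the minimal-length representative of the coset `w W_{P_i}`. -/
def IsMinRep (i : Fin R.r) (u w : R.Aut) : Prop :=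
  u ∈ R.minReps i ∧ u⁻¹ * w ∈ R.WPar i

/-- A weight is dominant if it pairs nonnegatively with every simple coroot. -/
def Dominant (lam : R.V) : Prop := ∀ i : Fin R.r, 0 ≤ R.coroot (R.α i) lam

/-- The dual action of the Weyl group on `V* `: `(u f)(v) = f(u⁻¹ v)`. -/
noncomputable def dualAct (u : R.Aut) (f : Module.Dual ℚ R.V) : Module.Dual ℚ R.V :=
  f.comp (u.symm : R.V →ₗ[ℚ] R.V)

/-- The Demazure polytope `P_λ^w := conv {uλ : u ∈ W, u ≤ w}`. -/
noncomputable def demPolytope (lam : R.V) (w : R.Aut) : Set R.V :=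
  convexHull ℚ {m | ∃ u : R.Aut, u ∈ R.weylGroup ∧ R.BruhatLE u w ∧ m = u lam}

/-- Membership in the weight lattice `X`. -/
def IsWeight (lam : R.V) : Prop := ∀ β ∈ R.Φ, ∃ m : ℤ, R.coroot β lam = (m : ℚ)

/-- The root lattice `Q = ℤΦ`. -/
noncomputable def rootLattice : AddSubgroup R.V := AddSubgroup.closure R.Φ

/-- `w₀` is the longest element of the Weyl group. -/
def IsLongest (w₀ : R.Aut) : Prop :=
  w₀ ∈ R.weylGroup ∧ ∀ g ∈ R.weylGroup, R.len g ≤ R.len w₀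

/-- The positive roots `Φ_{P_i}⁺ = Φ⁺ ∩ span {α_j : j ≠ i}` of the standard
Levi subsystem. -/
def parPos (i : Fin R.r) : Set R.V :=
  {η | η ∈ R.pos ∧ η ∈ Submodule.span ℚ (R.α '' {j | j ≠ i})}

/-- The value `D_i (e^λ)` of the Demazure operator on a basis element of the
group ring `ℤ[X]`. -/
noncomputable def demOnBasis (i : Fin R.r) (lam : R.V) : R.V →₀ ℤ :=
  if 0 ≤ ⌊R.coroot (R.α i) lam⌋ then
    ∑ k ∈ Finset.range (⌊R.coroot (R.α i) lam⌋.toNat + 1),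
      Finsupp.single (lam - (k : ℚ) • R.α i) 1
  else if ⌊R.coroot (R.α i) lam⌋ = -1 then 0
  else - ∑ k ∈ Finset.range ((-⌊R.coroot (R.α i) lam⌋).toNat - 1),
      Finsupp.single (lam + ((k : ℚ) + 1) • R.α i) 1

/-- The Demazure operator `D_i`, as a `ℤ`-linear endomorphism of the group
ring `ℤ[X]` (realized as finitely supported functions `V →₀ ℤ`). -/
noncomputable def demOp (i : Fin R.r) : (R.V →₀ ℤ) →ₗ[ℤ] (R.V →₀ ℤ) :=
  Finsupp.lsum ℤ fun lam => LinearMap.toSpanSingleton ℤ (R.V →₀ ℤ) (R.demOnBasis i lam)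

/-- The Demazure character `D_{i_1} ⋯ D_{i_k} (e^λ)`. -/
noncomputable def demChar (l : List (Fin R.r)) (lam : R.V) : R.V →₀ ℤ :=
  l.foldr (fun i p => R.demOp i p) (Finsupp.single lam 1)

/-- The axioms of a finite crystallographic root system spanning `V`, with
simple roots `α_i` and positive roots `pos`. -/
structure IsRootSystem (R : RootData) : Prop where
  finite : R.Φ.Finite
  span_top : Submodule.span ℚ R.Φ = ⊤
  ne_zero : ∀ β ∈ R.Φ, β ≠ 0
  coroot_self : ∀ β ∈ R.Φ, R.coroot β β = 2
  crystallographic : ∀ β ∈ R.Φ, ∀ γ ∈ R.Φ, ∃ m : ℤ, R.coroot β γ = (m : ℚ)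
  reflection_stable : ∀ β ∈ R.Φ, ∀ γ ∈ R.Φ, γ - R.coroot β γ • β ∈ R.Φ
  simple_mem : ∀ i, R.α i ∈ R.Φ
  indep : LinearIndependent ℚ R.α
  pos_subset : R.pos ⊆ R.Φ
  pos_or_neg : ∀ β ∈ R.Φ, (β ∈ R.pos ∧ -β ∉ R.pos) ∨ (β ∉ R.pos ∧ -β ∈ R.pos)
  simple_pos : ∀ i, R.α i ∈ R.pos
  pos_nonneg_comb : ∀ β ∈ R.pos, ∃ c : Fin R.r → ℚ, (∀ i, 0 ≤ c i) ∧ β = ∑ i, c i • R.α i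

end RootData

/-!
Let `l` be a reduced word for `w⁻¹` and write `π μ` for the product of a word `μ`. Unwinding the
definition, `w⁻¹ * v = π μ * v` for a subword `μ` of `l`, and the lifting property of the Bruhat
order shows that `w⁻¹ * v` dominates every `π μ * v` with `μ ⊆ l`: it is the maximum of these
elements. By the subword property the elements `q⁻¹` with `q ≤ w` are exactly the `π μ` with
`μ ⊆ l`, which gives the equivalence.

The subword property, i.e. the independence of the Bruhat order from the chosen reduced word, is
proved with Deodhar's argument: by induction on length, simultaneously with the lifting property
of the Bruhat order defined by reflection chains. Both rest on the strong exchange condition,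
which comes from the root system: `x t < x` for a reflection `t` exactly when `x` sends the
positive root of `t` to a negative root.
-/

namespace RootData

variable {R : RootData}

lemma s_mul_self (β : R.V) : R.s β * R.s β = 1 := by
  unfold s
  split_ifs with h
  · ext x
    exact LinearMap.congr_fun h x
  · exact mul_one _

lemma S_mul_self (i : Fin R.r) : R.S i * R.S i = 1 := s_mul_self _

@[simp] lemma S_inv (i : Fin R.r) : (R.S i)⁻¹ = R.S i :=
  inv_eq_of_mul_eq_one_right (S_mul_self i)

@[simp] lemma S_mul_S_mul (i : Fin R.r) (x : R.Aut) : R.S i * (R.S i * x) = x := by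
  rw [← mul_assoc, S_mul_self, one_mul]

@[simp] lemma wordProd_nil : R.wordProd [] = 1 := rfl

@[simp] lemma wordProd_cons (i : Fin R.r) (l : List (Fin R.r)) :
    R.wordProd (i :: l) = R.S i * R.wordProd l := by
  simp [wordProd]

lemma wordProd_singleton (i : Fin R.r) : R.wordProd [i] = R.S i := by
  simp

@[simp] lemma wordProd_append (l₁ l₂ : List (Fin R.r)) :
    R.wordProd (l₁ ++ l₂) = R.wordProd l₁ * R.wordProd l₂ := by
  simp [wordProd]

@[simp] lemma wordProd_reverse (l : List (Fin R.r)) :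
    R.wordProd l.reverse = (R.wordProd l)⁻¹ := by
  induction l with
  | nil => simp
  | cons i l ih => simp [ih]

lemma wordProd_mem_weylGroup (l : List (Fin R.r)) : R.wordProd l ∈ R.weylGroup := by
  induction l with
  | nil => exact R.weylGroup.one_mem
  | cons i l ih =>
    rw [wordProd_cons]
    exact R.weylGroup.mul_mem (Subgroup.subset_closure ⟨i, rfl⟩) ih

lemma exists_wordProd_eq {x : R.Aut} (hx : x ∈ R.weylGroup) : ∃ l, R.wordProd l = x := by
  induction hx using Subgroup.closure_induction with
  | mem y hy =>
    obtain ⟨i, rfl⟩ := hy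
    exact ⟨[i], by simp⟩
  | one => exact ⟨[], rfl⟩
  | mul y z _ _ hy hz =>
    obtain ⟨l₁, rfl⟩ := hy
    obtain ⟨l₂, rfl⟩ := hz
    exact ⟨l₁ ++ l₂, wordProd_append l₁ l₂⟩
  | inv y _ hy =>
    obtain ⟨l, rfl⟩ := hy
    exact ⟨l.reverse, wordProd_reverse l⟩

lemma S_mem_weylGroup (i : Fin R.r) : R.S i ∈ R.weylGroup := Subgroup.subset_closure ⟨i, rfl⟩

lemma len_wordProd_le (l : List (Fin R.r)) : R.len (R.wordProd l) ≤ l.length :=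
  Nat.sInf_le ⟨l, rfl, rfl⟩

lemma exists_reduced_wordProd_eq {x : R.Aut} (hx : x ∈ R.weylGroup) :
    ∃ l, R.Reduced l ∧ R.wordProd l = x := by
  obtain ⟨l, rfl⟩ := exists_wordProd_eq hx
  obtain ⟨m, hm, hmx⟩ := Nat.sInf_mem (⟨l.length, l, rfl, rfl⟩ :
    {n | ∃ m : List (Fin R.r), m.length = n ∧ R.wordProd m = R.wordProd l}.Nonempty)
  exact ⟨m, by rw [Reduced, hmx, hm]; rfl, hmx⟩

lemma len_inv_le {x : R.Aut} (hx : x ∈ R.weylGroup) : R.len x⁻¹ ≤ R.len x := by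
  obtain ⟨l, hl, rfl⟩ := exists_reduced_wordProd_eq hx
  calc R.len (R.wordProd l)⁻¹ = R.len (R.wordProd l.reverse) := by rw [wordProd_reverse]
    _ ≤ l.length := by simpa using len_wordProd_le l.reverse
    _ = R.len (R.wordProd l) := hl.symm

@[simp] lemma len_inv {x : R.Aut} (hx : x ∈ R.weylGroup) : R.len x⁻¹ = R.len x :=
  (len_inv_le hx).antisymm (by simpa using len_inv_le (inv_mem hx))

lemma len_mul_le {x y : R.Aut} (hx : x ∈ R.weylGroup) (hy : y ∈ R.weylGroup) :
    R.len (x * y) ≤ R.len x + R.len y := by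
  obtain ⟨l, hl, rfl⟩ := exists_reduced_wordProd_eq hx
  obtain ⟨m, hm, rfl⟩ := exists_reduced_wordProd_eq hy
  rw [← wordProd_append, hl, hm, ← List.length_append]
  exact len_wordProd_le _

lemma len_S_le_one (i : Fin R.r) : R.len (R.S i) ≤ 1 := by
  simpa using len_wordProd_le [i]

lemma len_mul_S_le {x : R.Aut} (hx : x ∈ R.weylGroup) (i : Fin R.r) :
    R.len (x * R.S i) ≤ R.len x + 1 :=
  (len_mul_le hx (S_mem_weylGroup i)).trans (by have := len_S_le_one i; omega)

lemma len_S_mul_le {x : R.Aut} (hx : x ∈ R.weylGroup) (i : Fin R.r) :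
    R.len (R.S i * x) ≤ R.len x + 1 :=
  (len_mul_le (S_mem_weylGroup i) hx).trans (by have := len_S_le_one i; omega)

def IsReflection (R : RootData) (t : R.Aut) : Prop :=
  ∃ x ∈ R.weylGroup, ∃ i, t = x * R.S i * x⁻¹

lemma IsReflection.mul_self {t : R.Aut} (ht : R.IsReflection t) : t * t = 1 := by
  obtain ⟨x, -, i, rfl⟩ := ht
  simp [mul_assoc, ← mul_assoc (R.S i), S_mul_self]

lemma IsReflection.mem_weylGroup {t : R.Aut} (ht : R.IsReflection t) : t ∈ R.weylGroup := by
  obtain ⟨x, hx, i, rfl⟩ := ht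
  exact mul_mem (mul_mem hx (S_mem_weylGroup i)) (inv_mem hx)

lemma isReflection_S (i : Fin R.r) : R.IsReflection (R.S i) :=
  ⟨1, R.weylGroup.one_mem, i, by simp⟩

lemma isReflection_conj {x : R.Aut} (hx : x ∈ R.weylGroup) (i : Fin R.r) :
    R.IsReflection (x * R.S i * x⁻¹) :=
  ⟨x, hx, i, rfl⟩

lemma exists_eq_append_cons_of_not_wordProd_apply {P : R.V → Prop} {β : R.V} (hβ : P β) :
    ∀ ω : List (Fin R.r), ¬ P (R.wordProd ω β) →
      ∃ ω₁ k ω₂, ω = ω₁ ++ k :: ω₂ ∧ P (R.wordProd ω₂ β) ∧ ¬ P (R.S k (R.wordProd ω₂ β))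
  | [], h => absurd hβ (by simpa using h)
  | a :: ω, h => by
    by_cases hω : P (R.wordProd ω β)
    · exact ⟨[], a, ω, rfl, hω, by simpa using h⟩
    · obtain ⟨ω₁, k, ω₂, rfl, h₁, h₂⟩ := exists_eq_append_cons_of_not_wordProd_apply hβ ω hω
      exact ⟨a :: ω₁, k, ω₂, rfl, h₁, h₂⟩

section

variable (hR : R.IsRootSystem)
include hR

lemma S_apply (i : Fin R.r) (x : R.V) : R.S i x = x - R.coroot (R.α i) x • R.α i := by
  have hsq : (R.reflMap (R.α i)).comp (R.reflMap (R.α i)) = LinearMap.id := by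
    ext x
    simp only [LinearMap.comp_apply, reflMap, LinearMap.sub_apply, LinearMap.id_apply,
      LinearMap.smulRight_apply, map_sub, map_smul, hR.coroot_self _ (hR.simple_mem i)]
    module
  rw [S, s, dif_pos hsq]
  rfl

lemma S_apply_α (i : Fin R.r) : R.S i (R.α i) = -R.α i := by
  rw [S_apply hR, hR.coroot_self _ (hR.simple_mem i)]
  module

lemma apply_mem_Φ {x : R.Aut} (hx : x ∈ R.weylGroup) {β : R.V} (hβ : β ∈ R.Φ) : x β ∈ R.Φ := by
  obtain ⟨l, rfl⟩ := exists_wordProd_eq hx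
  clear hx
  induction l with
  | nil => simpa
  | cons i l ih =>
    rw [wordProd_cons, LinearEquiv.mul_apply, S_apply hR]
    exact hR.reflection_stable _ (hR.simple_mem i) _ ih

lemma neg_notMem_pos {β : R.V} (hβ : β ∈ R.pos) : -β ∉ R.pos := by
  rcases hR.pos_or_neg β (hR.pos_subset hβ) with h | h
  · exact h.2
  · exact absurd hβ h.1

lemma neg_mem_pos {β : R.V} (hβ : β ∈ R.Φ) (h : β ∉ R.pos) : -β ∈ R.pos :=
  (hR.pos_or_neg β hβ).resolve_left (fun h' => h h'.1) |>.2

/-- Comparing the coefficients of `β` and `-s_i β` in the basis of simple roots: both are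
nonnegative, and they sum to a multiple of `α_i`. -/
lemma eq_smul_α_of_S_apply_notMem_pos {β : R.V} {i : Fin R.r} (hβ : β ∈ R.pos)
    (hSβ : R.S i β ∉ R.pos) : ∃ c : ℚ, 0 < c ∧ β = c • R.α i := by
  have hβΦ : β ∈ R.Φ := hR.pos_subset hβ
  obtain ⟨c, hc, hβc⟩ := hR.pos_nonneg_comb β hβ
  obtain ⟨d, hd, hSβd⟩ := hR.pos_nonneg_comb _
    (neg_mem_pos hR (apply_mem_Φ hR (S_mem_weylGroup i) hβΦ) hSβ)
  have hsum : ∑ m, (c m + d m - if m = i then R.coroot (R.α i) β else 0) • R.α m = 0 := by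
    simp only [sub_smul, add_smul, Finset.sum_add_distrib, Finset.sum_sub_distrib, ite_smul,
      zero_smul, Finset.sum_ite_eq', Finset.mem_univ, if_true, ← hβc, ← hSβd, S_apply hR]
    module
  have hcoeff := Fintype.linearIndependent_iff.mp hR.indep _ hsum
  have hc_eq : ∀ m, m ≠ i → c m = 0 := fun m hm => by
    have := hcoeff m
    rw [if_neg hm] at this
    linarith [hc m, hd m]
  have hβi : β = c i • R.α i := by
    rw [hβc, Finset.sum_eq_single i (fun m _ hm => by rw [hc_eq m hm, zero_smul]) (by simp)]
  refine ⟨c i, (hc i).lt_of_ne fun h => hR.ne_zero β hβΦ ?_, hβi⟩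
  rw [hβi, ← h, zero_smul]

/-- Composing the two reflections translates a root `γ` by `(g γ - f γ) • β`; since `Φ` is
finite, this translation vanishes. -/
lemma eq_of_reflection_stable {β : R.V} (hβ : β ≠ 0) {f g : Module.Dual ℚ R.V}
    (hf : f β = 2) (hg : g β = 2)
    (hfΦ : ∀ γ ∈ R.Φ, γ - f γ • β ∈ R.Φ) (hgΦ : ∀ γ ∈ R.Φ, γ - g γ • β ∈ R.Φ) : f = g := by
  refine LinearMap.ext_on hR.span_top fun γ hγ => ?_
  by_contra hne
  set δ := (g γ - f γ) • β
  have hδ : δ ≠ 0 := smul_ne_zero (sub_ne_zero.mpr (Ne.symm hne)) hβ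
  have hmem : ∀ n : ℕ, γ + (n : ℚ) • δ ∈ R.Φ := by
    intro n
    induction n with
    | zero => simpa using hγ
    | succ n ih =>
      convert hfΦ _ (hgΦ _ ih) using 1
      simp only [δ, map_add, map_sub, map_smul, hf, hg, smul_eq_mul, Nat.cast_succ]
      module
  refine Set.infinite_of_injective_forall_mem (fun a b hab => ?_) hmem hR.finite
  have : ((a : ℚ) - b) • δ = 0 := by
    rw [sub_smul, sub_eq_zero]
    exact add_left_cancel hab
  exact_mod_cast sub_eq_zero.mp ((smul_eq_zero.mp this).resolve_right hδ)

lemma conj_S_eq_S {E : R.Aut} (hE : E ∈ R.weylGroup) {i j : Fin R.r} {c : ℚ} (hc : c ≠ 0)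
    (hEα : E (R.α i) = c • R.α j) : E * R.S i * E⁻¹ = R.S j := by
  set f : Module.Dual ℚ R.V := c • (R.coroot (R.α i)).comp (E⁻¹ : R.Aut).toLinearMap
  have hconj : ∀ x, (E * R.S i * E⁻¹) x = x - f x • R.α j := fun x => by
    simp [f, S_apply hR, hEα, smul_smul, mul_comm]
  have hEinv : (E⁻¹ : R.Aut) (R.α j) = c⁻¹ • R.α i := by
    rw [eq_inv_smul_iff₀ hc, ← map_smul, ← hEα]
    simp
  have hf : f = R.coroot (R.α j) := by
    refine eq_of_reflection_stable hR (hR.ne_zero _ (hR.simple_mem j)) ?_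
      (hR.coroot_self _ (hR.simple_mem j)) (fun γ hγ => ?_)
      (fun γ hγ => hR.reflection_stable _ (hR.simple_mem j) _ hγ)
    · change c * R.coroot (R.α i) ((E⁻¹ : R.Aut) (R.α j)) = 2
      rw [hEinv, map_smul, hR.coroot_self _ (hR.simple_mem i), smul_eq_mul]
      field_simp
    · rw [← hconj]
      exact apply_mem_Φ hR (mul_mem (mul_mem hE (S_mem_weylGroup i)) (inv_mem hE)) hγ
  ext x
  rw [hconj, hf, S_apply hR]

lemma IsReflection.exists_pos {t : R.Aut} (ht : R.IsReflection t) :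
    ∃ x ∈ R.weylGroup, ∃ i, t = x * R.S i * x⁻¹ ∧ x (R.α i) ∈ R.pos := by
  obtain ⟨x, hx, i, rfl⟩ := ht
  by_cases h : x (R.α i) ∈ R.pos
  · exact ⟨x, hx, i, rfl, h⟩
  · refine ⟨x * R.S i, mul_mem hx (S_mem_weylGroup i), i, by group, ?_⟩
    rw [LinearEquiv.mul_apply, S_apply_α hR, map_neg]
    exact neg_mem_pos hR (apply_mem_Φ hR hx (hR.simple_mem i)) h

/-- The deleted letter `k` is the one at which the suffix products of `ω` turn the root `x α_i`
negative: the suffix `ω₂` after it conjugates `x s_i x⁻¹` to `s_k`. -/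
theorem exists_sublist_wordProd_eq_mul_of_not_pos (ω : List (Fin R.r)) {x : R.Aut}
    (hx : x ∈ R.weylGroup) {i : Fin R.r} (hβ : x (R.α i) ∈ R.pos)
    (hneg : R.wordProd ω (x (R.α i)) ∉ R.pos) :
    ∃ ω', ω'.Sublist ω ∧ ω'.length + 1 = ω.length ∧
      R.wordProd ω' = R.wordProd ω * (x * R.S i * x⁻¹) := by
  obtain ⟨ω₁, k, ω₂, rfl, h₁, h₂⟩ := exists_eq_append_cons_of_not_wordProd_apply hβ ω hneg
  obtain ⟨c, hc, hγ⟩ := eq_smul_α_of_S_apply_notMem_pos hR h₁ h₂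
  have hconj : R.wordProd ω₂ * x * R.S i * (R.wordProd ω₂ * x)⁻¹ = R.S k :=
    conj_S_eq_S hR (mul_mem (wordProd_mem_weylGroup ω₂) hx) hc.ne' hγ
  have hswap : R.wordProd ω₂ * (x * R.S i * x⁻¹) = R.S k * R.wordProd ω₂ := by
    rw [← hconj]
    group
  refine ⟨ω₁ ++ ω₂, List.Sublist.append_left (List.sublist_cons_self k ω₂) ω₁,
    by simp; omega, ?_⟩
  rw [wordProd_append, wordProd_append, wordProd_cons, mul_assoc, mul_assoc, hswap,
    S_mul_S_mul]

lemma len_mul_lt_of_not_pos {x y : R.Aut} (hx : x ∈ R.weylGroup) (hy : y ∈ R.weylGroup)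
    {i : Fin R.r} (hβ : x (R.α i) ∈ R.pos) (hneg : y (x (R.α i)) ∉ R.pos) :
    R.len (y * (x * R.S i * x⁻¹)) < R.len y := by
  obtain ⟨ω, hω, rfl⟩ := exists_reduced_wordProd_eq hy
  obtain ⟨ω', -, hlen, heq⟩ := exists_sublist_wordProd_eq_mul_of_not_pos hR ω hx hβ hneg
  rw [← heq, hω]
  exact (len_wordProd_le ω').trans_lt (by omega)

lemma len_lt_len_mul_of_pos {x y : R.Aut} (hx : x ∈ R.weylGroup) (hy : y ∈ R.weylGroup)
    {i : Fin R.r} (hβ : x (R.α i) ∈ R.pos) (hpos : y (x (R.α i)) ∈ R.pos) :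
    R.len y < R.len (y * (x * R.S i * x⁻¹)) := by
  have ht := isReflection_conj hx i
  have := len_mul_lt_of_not_pos hR hx (mul_mem hy ht.mem_weylGroup) hβ (by
    simpa [S_apply_α hR] using neg_notMem_pos hR hpos)
  rwa [mul_assoc, ht.mul_self, mul_one] at this

theorem exists_sublist_wordProd_eq_mul {t : R.Aut} (ht : R.IsReflection t)
    (ω : List (Fin R.r)) (hlt : R.len (R.wordProd ω * t) < R.len (R.wordProd ω)) :
    ∃ ω', ω'.Sublist ω ∧ ω'.length + 1 = ω.length ∧ R.wordProd ω' = R.wordProd ω * t := by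
  obtain ⟨x, hx, i, rfl, hβ⟩ := ht.exists_pos hR
  refine exists_sublist_wordProd_eq_mul_of_not_pos hR ω hx hβ fun hpos => ?_
  exact (len_lt_len_mul_of_pos hR hx (wordProd_mem_weylGroup ω) hβ hpos).not_gt hlt

lemma len_mul_S_cases {x : R.Aut} (hx : x ∈ R.weylGroup) (i : Fin R.r) :
    R.len (x * R.S i) = R.len x + 1 ∨ R.len (x * R.S i) + 1 = R.len x := by
  have hβ : (1 : R.Aut) (R.α i) ∈ R.pos := hR.simple_pos i
  have hS : (1 : R.Aut) * R.S i * 1⁻¹ = R.S i := by simp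
  have hup := len_mul_S_le hx i
  have hdown := len_mul_S_le (mul_mem hx (S_mem_weylGroup i)) i
  rw [mul_assoc, S_mul_self, mul_one] at hdown
  by_cases h : x (R.α i) ∈ R.pos
  · have := len_lt_len_mul_of_pos hR R.weylGroup.one_mem hx hβ h
    rw [hS] at this
    omega
  · have := len_mul_lt_of_not_pos hR R.weylGroup.one_mem hx hβ h
    rw [hS] at this
    omega

lemma len_S_mul_cases {x : R.Aut} (hx : x ∈ R.weylGroup) (i : Fin R.r) :
    R.len (R.S i * x) = R.len x + 1 ∨ R.len (R.S i * x) + 1 = R.len x := by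
  have h := len_mul_S_cases hR (inv_mem hx) i
  rwa [← S_inv, ← mul_inv_rev, len_inv (mul_mem (S_mem_weylGroup i) hx), len_inv hx] at h

end

lemma reduced_nil : R.Reduced [] := Nat.le_zero.mp (len_wordProd_le [])

lemma Reduced.of_cons {i : Fin R.r} {ω : List (Fin R.r)} (h : R.Reduced (i :: ω)) :
    R.Reduced ω := by
  have hle := len_S_mul_le (wordProd_mem_weylGroup ω) i
  have := len_wordProd_le ω
  rw [Reduced, wordProd_cons, List.length_cons] at h
  rw [Reduced]
  omega

lemma Reduced.cons {i : Fin R.r} {ω : List (Fin R.r)} (h : R.Reduced ω)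
    (hlt : R.len (R.wordProd ω) < R.len (R.S i * R.wordProd ω)) : R.Reduced (i :: ω) := by
  have hle := len_S_mul_le (wordProd_mem_weylGroup ω) i
  rw [Reduced, wordProd_cons, List.length_cons, ← h]
  omega

lemma exists_reduced_cons_wordProd_eq {y : R.Aut} (hy : y ∈ R.weylGroup) {i : Fin R.r}
    (hlt : R.len (R.S i * y) < R.len y) : ∃ ω, R.Reduced (i :: ω) ∧ R.wordProd (i :: ω) = y := by
  obtain ⟨ω, hω, hωy⟩ := exists_reduced_wordProd_eq (mul_mem (S_mem_weylGroup i) hy)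
  refine ⟨ω, hω.cons ?_, by rw [wordProd_cons, hωy, S_mul_S_mul]⟩
  rwa [hωy, S_mul_S_mul]

lemma exists_sublist_wordProd_eq_S_mul {i : Fin R.r} {ω μ : List (Fin R.r)}
    (hμ : μ.Sublist (i :: ω)) : ∃ ν, ν.Sublist (i :: ω) ∧ R.wordProd ν = R.S i * R.wordProd μ := by
  cases hμ with
  | cons _ h => exact ⟨i :: μ, h.cons_cons i, wordProd_cons i μ⟩
  | cons_cons _ h => exact ⟨_, h.cons i, by simp⟩

def ChainLE (R : RootData) : R.Aut → R.Aut → Prop :=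
  Relation.ReflTransGen fun x y => ∃ t, R.IsReflection t ∧ x * t = y ∧ R.len x < R.len y

lemma ChainLE.S_mul {x y : R.Aut} (h : R.ChainLE x y) (hy : y ∈ R.weylGroup) {i : Fin R.r}
    (hlt : R.len y < R.len (R.S i * y)) : R.ChainLE x (R.S i * y) :=
  h.tail ⟨y⁻¹ * R.S i * y⁻¹⁻¹, isReflection_conj (inv_mem hy) i, by group, hlt⟩

/-- Deodhar's property Z, for the chain order. -/
def LiftingProperty (R : RootData) (x : R.Aut) : Prop :=
  ∀ i, R.len x < R.len (R.S i * x) →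
    ∀ a, R.ChainLE a x → R.ChainLE (R.S i * a) (R.S i * x)

def SubwordProperty (R : RootData) (x : R.Aut) : Prop :=
  ∀ ω, R.Reduced ω → R.wordProd ω = x →
    ∀ a, R.ChainLE a x ↔ ∃ μ, μ.Sublist ω ∧ R.wordProd μ = a

lemma chainLE_of_sublist {ω μ : List (Fin R.r)} (hω : R.Reduced ω)
    (hbelow : ∀ y ∈ R.weylGroup, R.len y < R.len (R.wordProd ω) →
      R.LiftingProperty y ∧ R.SubwordProperty y)
    (hμ : μ.Sublist ω) : R.ChainLE (R.wordProd μ) (R.wordProd ω) := by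
  cases ω with
  | nil => rw [List.sublist_nil.mp hμ]; exact .refl
  | cons i ω =>
    have hω₀ := hω.of_cons
    have hlt : R.len (R.wordProd ω) < R.len (R.S i * R.wordProd ω) := by
      rw [← wordProd_cons, hω, hω₀, List.length_cons]
      omega
    obtain ⟨hlift, hsub⟩ := hbelow _ (wordProd_mem_weylGroup ω) (by rwa [wordProd_cons])
    rw [wordProd_cons]
    cases hμ with
    | cons _ h =>
      exact ((hsub ω hω₀ rfl _).2 ⟨μ, h, rfl⟩).S_mul (wordProd_mem_weylGroup ω) hlt
    | cons_cons _ h =>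
      rw [wordProd_cons]
      exact hlift i hlt _ ((hsub ω hω₀ rfl _).2 ⟨_, h, rfl⟩)

lemma chainLE_S_mul_of_len_lt {y a : R.Aut} (hy : y ∈ R.weylGroup) (hsub : R.SubwordProperty y)
    (hbelow : ∀ z ∈ R.weylGroup, R.len z < R.len y → R.LiftingProperty z ∧ R.SubwordProperty z)
    {i : Fin R.r} (hlt : R.len (R.S i * y) < R.len y) (h : R.ChainLE a y) :
    R.ChainLE (R.S i * a) y := by
  obtain ⟨ω, hω, rfl⟩ := exists_reduced_cons_wordProd_eq hy hlt
  obtain ⟨μ, hμ, rfl⟩ := (hsub _ hω rfl a).1 h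
  obtain ⟨ν, hν, hνμ⟩ := exists_sublist_wordProd_eq_S_mul hμ
  rw [← hνμ]
  exact chainLE_of_sublist hω hbelow hν

section

variable (hR : R.IsRootSystem)
include hR

lemma exists_reduced_sublist (μ : List (Fin R.r)) :
    ∃ ν, ν.Sublist μ ∧ R.Reduced ν ∧ R.wordProd ν = R.wordProd μ := by
  induction μ using List.reverseRecOn with
  | nil => exact ⟨[], .slnil, reduced_nil, rfl⟩
  | append_singleton μ a ih =>
    obtain ⟨ν, hνμ, hν, hνeq⟩ := ih
    have hprod : R.wordProd (μ ++ [a]) = R.wordProd ν * R.S a := by simp [hνeq]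
    rcases len_mul_S_cases hR (wordProd_mem_weylGroup ν) a with h | h
    · refine ⟨ν ++ [a], hνμ.append_right [a], ?_, by simp [hprod]⟩
      rw [Reduced, wordProd_append, wordProd_singleton, h, hν, List.length_append,
        List.length_singleton]
    · obtain ⟨ν', hν'ν, hlen, heq⟩ :=
        exists_sublist_wordProd_eq_mul hR (isReflection_S a) ν (by omega)
      refine ⟨ν', hν'ν.trans (hνμ.trans (List.sublist_append_left μ [a])), ?_, by rw [heq, hprod]⟩
      rw [Reduced, heq]
      rw [Reduced] at hν
      omega

lemma len_S_mul_lt_of_not_lt {x : R.Aut} (hx : x ∈ R.weylGroup) {i : Fin R.r}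
    (h : ¬ R.len x < R.len (R.S i * x)) : R.len (R.S i * x) < R.len x := by
  rcases len_S_mul_cases hR hx i with h' | h' <;> omega

lemma exists_sublist_of_chainLE {x a : R.Aut}
    (hbelow : ∀ y ∈ R.weylGroup, R.len y < R.len x → R.SubwordProperty y)
    {ω : List (Fin R.r)} (hωx : R.wordProd ω = x) (h : R.ChainLE a x) :
    ∃ μ, μ.Sublist ω ∧ R.wordProd μ = a := by
  rcases h.cases_tail with rfl | ⟨y, hay, t, ht, hyt, hlt⟩
  · exact ⟨ω, .refl ω, hωx⟩
  have hy : R.wordProd ω * t = y := by rw [hωx, ← hyt, mul_assoc, ht.mul_self, mul_one]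
  obtain ⟨ω', hω'ω, -, hω'⟩ :=
    exists_sublist_wordProd_eq_mul hR ht ω (by rwa [hy, hωx])
  obtain ⟨ν, hνω', hν, hνy⟩ := exists_reduced_sublist hR ω'
  rw [hω', hy] at hνy
  obtain ⟨μ, hμν, hμa⟩ := (hbelow y (hνy ▸ wordProd_mem_weylGroup ν) hlt ν hν hνy a).1 hay
  exact ⟨μ, hμν.trans (hνω'.trans hω'ω), hμa⟩

lemma liftingProperty_of_forall_len_lt {x : R.Aut} (hx : x ∈ R.weylGroup)
    (hbelow : ∀ y ∈ R.weylGroup, R.len y < R.len x → R.LiftingProperty y ∧ R.SubwordProperty y) :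
    R.LiftingProperty x := by
  intro i hasc a h
  rcases h.cases_tail with rfl | ⟨y, hay, t, ht, rfl, hlt⟩
  · exact .refl
  have hy : y ∈ R.weylGroup := by
    simpa [mul_assoc, ht.mul_self] using mul_mem hx ht.mem_weylGroup
  have hxy := hbelow y hy hlt
  by_cases hyasc : R.len y < R.len (R.S i * y)
  · refine .tail (hxy.1 i hyasc a hay) ⟨t, ht, mul_assoc _ _ _, ?_⟩
    have := len_S_mul_le hy i
    have := len_S_mul_le hx i
    rw [← mul_assoc] at hasc ⊢
    omega
  · have hSa := chainLE_S_mul_of_len_lt hy hxy.2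
      (fun z hz hzy => hbelow z hz (hzy.trans hlt)) (len_S_mul_lt_of_not_lt hR hy hyasc) hay
    exact ChainLE.S_mul (hSa.tail ⟨t, ht, rfl, hlt⟩) hx hasc

theorem liftingProperty_and_subwordProperty {x : R.Aut} (hx : x ∈ R.weylGroup) :
    R.LiftingProperty x ∧ R.SubwordProperty x := by
  have hbelow : ∀ y ∈ R.weylGroup, R.len y < R.len x →
      R.LiftingProperty y ∧ R.SubwordProperty y :=
    fun y hy _ => liftingProperty_and_subwordProperty hy
  refine ⟨liftingProperty_of_forall_len_lt hR hx hbelow, fun ω hω hωx a => ⟨fun h =>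
    exists_sublist_of_chainLE hR (fun y hy hlt => (hbelow y hy hlt).2) hωx h, ?_⟩⟩
  rintro ⟨μ, hμ, rfl⟩
  subst hωx
  exact chainLE_of_sublist hω hbelow hμ
termination_by R.len x

end

lemma bruhatLE_refl {x : R.Aut} (hx : x ∈ R.weylGroup) : R.BruhatLE x x := by
  obtain ⟨l, hl, rfl⟩ := exists_reduced_wordProd_eq hx
  exact ⟨l, hl, rfl, l, .refl l, rfl⟩

lemma Reduced.reverse {l : List (Fin R.r)} (h : R.Reduced l) : R.Reduced l.reverse := by
  rwa [Reduced, wordProd_reverse, len_inv (wordProd_mem_weylGroup l), List.length_reverse]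

lemma BruhatLE.inv {x y : R.Aut} (h : R.BruhatLE x y) : R.BruhatLE x⁻¹ y⁻¹ := by
  obtain ⟨l, hl, rfl, l', hl'l, rfl⟩ := h
  exact ⟨l.reverse, hl.reverse, wordProd_reverse l, l'.reverse, hl'l.reverse, wordProd_reverse l'⟩

@[simp] lemma bruhatLE_inv_iff {x y : R.Aut} : R.BruhatLE x⁻¹ y⁻¹ ↔ R.BruhatLE x y :=
  ⟨fun h => by simpa using h.inv, BruhatLE.inv⟩

lemma BruhatLE.le_S_mul {x y : R.Aut} (h : R.BruhatLE y x) {i : Fin R.r}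
    (hlt : R.len x < R.len (R.S i * x)) : R.BruhatLE y (R.S i * x) := by
  obtain ⟨ω, hω, rfl, μ, hμ, rfl⟩ := h
  exact ⟨i :: ω, hω.cons hlt, wordProd_cons i ω, μ, hμ.cons i, rfl⟩

lemma BruhatLE.S_mul_le_S_mul {x y : R.Aut} (h : R.BruhatLE y x) {i : Fin R.r}
    (hlt : R.len x < R.len (R.S i * x)) : R.BruhatLE (R.S i * y) (R.S i * x) := by
  obtain ⟨ω, hω, rfl, μ, hμ, rfl⟩ := h
  exact ⟨i :: ω, hω.cons hlt, wordProd_cons i ω, i :: μ, hμ.cons_cons i, wordProd_cons i μ⟩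

lemma dmulList_cons (i : Fin R.r) (l : List (Fin R.r)) (v : R.Aut) :
    R.dmulList (i :: l) v = R.dmulStep i (R.dmulList l v) := rfl

lemma exists_sublist_dmulList_eq (l : List (Fin R.r)) (v : R.Aut) :
    ∃ μ, μ.Sublist l ∧ R.dmulList l v = R.wordProd μ * v := by
  induction l with
  | nil => exact ⟨[], .slnil, by simp [dmulList]⟩
  | cons i l ih =>
    obtain ⟨μ, hμ, heq⟩ := ih
    rw [dmulList_cons, dmulStep, heq]
    split_ifs
    · exact ⟨i :: μ, hμ.cons_cons i, by rw [wordProd_cons, mul_assoc]⟩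
    · exact ⟨μ, hμ.cons i, rfl⟩

lemma dmulList_mem_weylGroup {v : R.Aut} (hv : v ∈ R.weylGroup) (l : List (Fin R.r)) :
    R.dmulList l v ∈ R.weylGroup := by
  obtain ⟨μ, -, heq⟩ := exists_sublist_dmulList_eq l v
  exact heq ▸ mul_mem (wordProd_mem_weylGroup μ) hv

lemma exists_reduced_dmul_eq_dmulList {x : R.Aut} (hx : x ∈ R.weylGroup) (v : R.Aut) :
    ∃ l, R.Reduced l ∧ R.wordProd l = x ∧ R.dmul x v = R.dmulList l v := by
  have h : ∃ l, R.Reduced l ∧ R.wordProd l = x := exists_reduced_wordProd_eq hx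
  exact ⟨h.choose, h.choose_spec.1, h.choose_spec.2, by rw [dmul, dif_pos h]⟩

section

variable (hR : R.IsRootSystem)
include hR

theorem bruhatLE_iff_exists_sublist {x y : R.Aut} {ω : List (Fin R.r)} (hω : R.Reduced ω)
    (hωy : R.wordProd ω = y) : R.BruhatLE x y ↔ ∃ μ, μ.Sublist ω ∧ R.wordProd μ = x := by
  refine ⟨fun ⟨l, hl, hly, l', hl'l, hl'x⟩ => ?_, fun ⟨μ, hμ, hμx⟩ => ⟨ω, hω, hωy, μ, hμ, hμx⟩⟩
  have hsub := (liftingProperty_and_subwordProperty hR (hly ▸ wordProd_mem_weylGroup l)).2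
  exact (hsub ω hω hωy x).1 ((hsub l hl hly x).2 ⟨l', hl'l, hl'x⟩)

theorem BruhatLE.trans {x y z : R.Aut} (hxy : R.BruhatLE x y) (hyz : R.BruhatLE y z) :
    R.BruhatLE x z := by
  obtain ⟨l, hl, hlz, l', hl'l, hl'y⟩ := hyz
  obtain ⟨ν, hνl', hν, hνy⟩ := exists_reduced_sublist hR l'
  obtain ⟨μ, hμν, hμx⟩ := (bruhatLE_iff_exists_sublist hR hν (hνy.trans hl'y)).1 hxy
  exact (bruhatLE_iff_exists_sublist hR hl hlz).2 ⟨μ, hμν.trans (hνl'.trans hl'l), hμx⟩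

lemma BruhatLE.S_mul_le {x y : R.Aut} (h : R.BruhatLE y x) (hx : x ∈ R.weylGroup)
    {i : Fin R.r} (hle : ¬ R.len x < R.len (R.S i * x)) : R.BruhatLE (R.S i * y) x := by
  obtain ⟨ω, hω, rfl⟩ := exists_reduced_cons_wordProd_eq hx (len_S_mul_lt_of_not_lt hR hx hle)
  obtain ⟨μ, hμ, rfl⟩ := (bruhatLE_iff_exists_sublist hR hω rfl).1 h
  exact (bruhatLE_iff_exists_sublist hR hω rfl).2 (exists_sublist_wordProd_eq_S_mul hμ)

theorem wordProd_mul_le_dmulList {v : R.Aut} (hv : v ∈ R.weylGroup) {l μ : List (Fin R.r)}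
    (hμ : μ.Sublist l) : R.BruhatLE (R.wordProd μ * v) (R.dmulList l v) := by
  induction hμ with
  | slnil => simpa [dmulList] using bruhatLE_refl hv
  | cons i _ ih =>
    rw [dmulList_cons, dmulStep]
    split_ifs with h
    · exact ih.le_S_mul h
    · exact ih
  | cons_cons i _ ih =>
    rw [dmulList_cons, dmulStep, wordProd_cons, mul_assoc]
    split_ifs with h
    · exact ih.S_mul_le_S_mul h
    · exact ih.S_mul_le hR (dmulList_mem_weylGroup hv _) h

end

end RootData

theorem statement7_general (R : RootData) (hR : R.IsRootSystem)
    (u v w : R.Aut) (hv : v ∈ R.weylGroup)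
    (hw : w ∈ R.weylGroup) :
    (∀ q : R.Aut, R.BruhatLE q w → R.BruhatLE (q⁻¹ * v) u) ↔
      R.BruhatLE (R.dmul w⁻¹ v) u := by
  obtain ⟨l, hl, hlw, hdmul⟩ := RootData.exists_reduced_dmul_eq_dmulList (inv_mem hw) v
  have hle_w : ∀ q, R.BruhatLE q w ↔ ∃ μ, μ.Sublist l ∧ R.wordProd μ = q⁻¹ := fun q => by
    rw [← RootData.bruhatLE_inv_iff, RootData.bruhatLE_iff_exists_sublist hR hl hlw]
  rw [hdmul]
  constructor
  · intro h
    obtain ⟨μ, hμ, heq⟩ := RootData.exists_sublist_dmulList_eq l v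
    simpa [heq] using h (R.wordProd μ)⁻¹ ((hle_w _).2 ⟨μ, hμ, inv_inv _⟩)
  · intro h q hq
    obtain ⟨μ, hμ, hμq⟩ := (hle_w q).1 hq
    rw [← hμq]
    exact (RootData.wordProd_mul_le_dmulList hR hv hμ).trans hR h

theorem statement7 (R : RootData) (hR : R.IsRootSystem)
    (u v w : R.Aut) (hu : u ∈ R.weylGroup) (hv : v ∈ R.weylGroup)
    (hw : w ∈ R.weylGroup) :
    (∀ q : R.Aut, R.BruhatLE q w → R.BruhatLE (q⁻¹ * v) u) ↔
      R.BruhatLE (R.dmul w⁻¹ v) u :=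
  statement7_general R hR u v w hv hw
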